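/- (Björner) Let M be a loopless matroid of rank d+1 on the ground set E = {0, 1, …, n}, and write its reduced characteristic polynomial as χ̄_M(t) := χ_M(t)/(t−1) = m_0 t^d − m_1 t^{d−1} + ⋯ + (−1)^d m_d. Then m_k equals the number of k-step flags F_1 ⊊ F_2 ⊊ ⋯ ⊊ F_k of nonempty proper flats of M that are initial, meaning r(F_i) = i for all i, and descending, meaning min(F_1) > min(F_2) > ⋯ > min(F_k) > 0. -/

import Mathlib

/-- A matroid on a finite ground set `E`, given by the independence axioms (I1)-(I3). -/
structure FinMatroid (E : Type*) [Fintype E] [DecidableEq E] where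
  Indep : Finset E → Prop
  indep_empty : Indep ∅
  indep_subset : ∀ ⦃I J : Finset E⦄, Indep J → I ⊆ J → Indep I
  indep_exchange : ∀ ⦃I J : Finset E⦄, Indep I → Indep J → I.card < J.card →
    ∃ e ∈ J, e ∉ I ∧ Indep (insert e I)

namespace FinMatroid

variable {E : Type*} [Fintype E] [DecidableEq E]

open Classical in
/-- The rank of a subset `A`: the maximal cardinality of an independent subset of `A`. -/
noncomputable def rank (M : FinMatroid E) (A : Finset E) : ℕ :=
  (A.powerset.filter fun I => M.Indep I).sup Finset.card

/-- The rank of the matroid. -/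
noncomputable def rk (M : FinMatroid E) : ℕ := M.rank Finset.univ

/-- The closure of a subset `A`: all elements `x` with `r(A ∪ {x}) = r(A)`. -/
noncomputable def closure (M : FinMatroid E) (A : Finset E) : Finset E :=
  Finset.univ.filter fun x => M.rank (insert x A) = M.rank A

/-- A flat is a closed subset. -/
def IsFlat (M : FinMatroid E) (F : Finset E) : Prop := M.closure F = F

/-- A matroid is loopless if the closure of the empty set is empty. -/
def Loopless (M : FinMatroid E) : Prop := M.closure ∅ = ∅

/-- A basis is a maximal independent set. -/
def IsBase (M : FinMatroid E) (B : Finset E) : Prop :=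
  M.Indep B ∧ ∀ ⦃J⦄, M.Indep J → B ⊆ J → J = B

open Classical in
/-- The finset of all flats of `M`. -/
noncomputable def flats (M : FinMatroid E) : Finset (Finset E) :=
  Finset.univ.filter fun F => M.IsFlat F

open Classical in
/-- `mu` is the Möbius function of the lattice of flats of `M`: it satisfies `mu F F = 1`,
`mu F F' = 0` when `¬ F ⊆ F'`, and for `F ⊂ F'` the sum of `mu F G` over the flats
`F ⊆ G ⊆ F'` vanishes. These properties determine `mu` uniquely on pairs of flats. -/
def IsMobius (M : FinMatroid E) (mu : Finset E → Finset E → ℤ) : Prop :=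
  (∀ F ∈ M.flats, mu F F = 1) ∧
  (∀ F ∈ M.flats, ∀ F' ∈ M.flats, ¬F ⊆ F' → mu F F' = 0) ∧
  (∀ F ∈ M.flats, ∀ F' ∈ M.flats, F ⊂ F' →
    ∑ G ∈ M.flats.filter (fun G => F ⊆ G ∧ G ⊆ F'), mu F G = 0)

open Classical in
/-- The characteristic polynomial of a matroid `M` (relative to the Möbius function `mu` of
its lattice of flats): `χ_M(t) = Σ_{F ∈ L(M)} μ(∅,F) t^{r(E) - r(F)}` if `M` is loopless,
and `0` if `M` has a loop. -/
noncomputable def charPoly (M : FinMatroid E) (mu : Finset E → Finset E → ℤ) : Polynomial ℤ :=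
  if M.Loopless then
    ∑ F ∈ M.flats, Polynomial.C (mu ∅ F) * Polynomial.X ^ (M.rk - M.rank F)
  else 0

end FinMatroid

/-!
By Möbius inversion over the lattice of flats, `μ(∅, F) = (-1)^r(F)` times the number of
initial descending flags ending at `F`: both sides are `1` at `∅`, and for a nonempty flat `F`
with least element `e` the alternating count `∑ⱼ (-1)^j Nⱼ(F)` of initial descending flags of
length `j` inside `F` vanishes, because deleting the last flat is a bijection from the flags of
length `j + 1` whose union contains `e` onto the flags of length `j` whose union avoids `e`
(the inverse appends `cl(G ∪ {e})` to a flag with union `G`). Hence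
`χ_M(t) = ∑ⱼ (-1)^j Nⱼ(E) t^(d+1-j)`, and the coefficients of `χ_M(t)/(t-1)` are the partial
sums `∑_{j ≤ k} (-1)^j Nⱼ(E) = (-1)^k · #{flags of length k whose union avoids 0}`.
-/

namespace FinMatroid

open Finset

variable {E : Type*} [Fintype E] [DecidableEq E] (M : FinMatroid E)

lemma card_le_rank {I A : Finset E} (hIA : I ⊆ A) (hI : M.Indep I) : #I ≤ M.rank A :=
  le_sup (f := card) (by simpa using ⟨hIA, hI⟩)

lemma exists_indep_card_eq_rank (A : Finset E) : ∃ I ⊆ A, M.Indep I ∧ #I = M.rank A := by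
  classical
  unfold rank
  obtain ⟨I, hI, hcard⟩ := exists_mem_eq_sup (A.powerset.filter M.Indep)
    ⟨∅, by simp [M.indep_empty]⟩ card
  simp only [mem_filter, mem_powerset] at hI
  exact ⟨I, hI.1, hI.2, hcard.symm⟩

lemma rank_le_iff {A : Finset E} {m : ℕ} : M.rank A ≤ m ↔ ∀ I ⊆ A, M.Indep I → #I ≤ m := by
  simp [rank]

lemma rank_mono {A B : Finset E} (h : A ⊆ B) : M.rank A ≤ M.rank B :=
  (M.rank_le_iff).2 fun _ hI hind => M.card_le_rank (hI.trans h) hind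

@[simp]
lemma rank_empty : M.rank ∅ = 0 :=
  Nat.eq_zero_of_le_zero <| (M.rank_le_iff).2 fun I hI _ => by simp [subset_empty.1 hI]

lemma exists_indep_superset_card_eq_rank {I A : Finset E} (hIA : I ⊆ A) (hI : M.Indep I) :
    ∃ J, I ⊆ J ∧ J ⊆ A ∧ M.Indep J ∧ #J = M.rank A := by
  classical
  obtain ⟨J, hJ, hmax⟩ := exists_max_image (A.powerset.filter fun J => I ⊆ J ∧ M.Indep J) card
    ⟨I, by simp [hIA, hI]⟩
  simp only [mem_filter, mem_powerset] at hJ hmax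
  obtain ⟨hJA, hIJ, hJ⟩ := hJ
  refine ⟨J, hIJ, hJA, hJ, (M.card_le_rank hJA hJ).antisymm (not_lt.1 fun hlt => ?_)⟩
  obtain ⟨K, hKA, hK, hKcard⟩ := M.exists_indep_card_eq_rank A
  obtain ⟨e, heK, heJ, hind⟩ := M.indep_exchange hJ hK (hKcard ▸ hlt)
  have := hmax _ ⟨insert_subset (hKA heK) hJA, hIJ.trans (subset_insert _ _), hind⟩
  rw [card_insert_of_notMem heJ] at this
  omega

lemma rank_insert_le (A : Finset E) (x : E) : M.rank (insert x A) ≤ M.rank A + 1 := by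
  refine (M.rank_le_iff).2 fun I hI hind => ?_
  have hIx : I.erase x ⊆ A := fun y hy => by
    simpa [(mem_erase.1 hy).1] using hI (mem_of_mem_erase hy)
  have := M.card_le_rank hIx (M.indep_subset hind (erase_subset _ _))
  have := pred_card_le_card_erase (s := I) (a := x)
  omega

lemma indep_insert_of_rank_lt {J A : Finset E} {x : E} (hJA : J ⊆ A) (hJ : M.Indep J)
    (hJcard : #J = M.rank A) (hx : M.rank A < M.rank (insert x A)) :
    M.Indep (insert x J) := by
  obtain ⟨K, hKA, hK, hKcard⟩ := M.exists_indep_card_eq_rank (insert x A)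
  obtain ⟨e, heK, heJ, hind⟩ := M.indep_exchange hJ hK (by omega)
  rcases mem_insert.1 (hKA heK) with rfl | heA
  · exact hind
  · have := M.card_le_rank (insert_subset heA hJA) hind
    rw [card_insert_of_notMem heJ] at this
    omega

lemma rank_insert_eq_of_subset {A B : Finset E} {x : E} (hAB : A ⊆ B)
    (hA : M.rank (insert x A) = M.rank A) : M.rank (insert x B) = M.rank B := by
  refine le_antisymm (not_lt.1 fun hlt => ?_) (M.rank_mono (subset_insert _ _))
  obtain ⟨I, hIA, hI, hIcard⟩ := M.exists_indep_card_eq_rank A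
  obtain ⟨J, hIJ, hJB, hJ, hJcard⟩ := M.exists_indep_superset_card_eq_rank (hIA.trans hAB) hI
  have hxI : x ∉ I := fun hxI => by
    rw [insert_eq_of_mem (hAB (hIA hxI))] at hlt
    exact lt_irrefl _ hlt
  have := M.card_le_rank (insert_subset_insert x hIA)
    (M.indep_subset (M.indep_insert_of_rank_lt hJB hJ hJcard hlt) (insert_subset_insert x hIJ))
  rw [card_insert_of_notMem hxI] at this
  omega

lemma mem_closure {A : Finset E} {x : E} : x ∈ M.closure A ↔ M.rank (insert x A) = M.rank A := by
  simp [closure]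

lemma subset_closure (A : Finset E) : A ⊆ M.closure A := fun x hx => by
  rw [mem_closure, insert_eq_of_mem hx]

lemma rank_union_eq_of_subset_closure {A S : Finset E} (hS : S ⊆ M.closure A) :
    M.rank (A ∪ S) = M.rank A := by
  induction S using Finset.induction_on with
  | empty => simp
  | insert x S _ ih =>
    rw [union_insert, M.rank_insert_eq_of_subset subset_union_left
      (M.mem_closure.1 (hS (mem_insert_self x S))), ih ((subset_insert x S).trans hS)]

lemma rank_closure (A : Finset E) : M.rank (M.closure A) = M.rank A := by
  have := M.rank_union_eq_of_subset_closure (subset_refl (M.closure A))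
  rwa [union_eq_right.2 (M.subset_closure A)] at this

lemma isFlat_closure (A : Finset E) : M.IsFlat (M.closure A) := by
  refine (subset_closure M _).antisymm' fun x hx => ?_
  rw [mem_closure] at hx ⊢
  rw [rank_closure] at hx
  have := M.rank_mono (insert_subset_insert x (M.subset_closure A))
  have := M.rank_mono (subset_insert x A)
  omega

lemma isFlat_univ : M.IsFlat univ :=
  (M.subset_closure univ).antisymm' (subset_univ _)

lemma mem_flats {F : Finset E} : F ∈ M.flats ↔ M.IsFlat F := by
  simp [flats]

namespace IsFlat

variable {M} {F : Finset E} (hF : M.IsFlat F)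
include hF

lemma closure_subset {X : Finset E} (hXF : X ⊆ F) : M.closure X ⊆ F := fun _ hx =>
  hF ▸ M.mem_closure.2 (M.rank_insert_eq_of_subset hXF (M.mem_closure.1 hx))

lemma rank_lt_rank_insert {x : E} (hx : x ∉ F) : M.rank F < M.rank (insert x F) :=
  (M.rank_mono (subset_insert x F)).lt_of_ne fun h => hx (hF ▸ M.mem_closure.2 h.symm)

lemma rank_insert {x : E} (hx : x ∉ F) : M.rank (insert x F) = M.rank F + 1 :=
  le_antisymm (M.rank_insert_le F x) (hF.rank_lt_rank_insert hx)

lemma eq_of_subset_of_rank_le {G : Finset E} (hFG : F ⊆ G) (hr : M.rank G ≤ M.rank F) :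
    F = G := by
  refine hFG.antisymm fun x hxG => not_not.1 fun hxF => ?_
  have := M.rank_mono (insert_subset hxG hFG)
  have := hF.rank_lt_rank_insert hxF
  omega

end IsFlat

variable {M} {mu : Finset E → Finset E → ℤ}

lemma IsMobius.apply_empty_eq (hM : M.Loopless) (hmu : M.IsMobius mu) {ν : Finset E → ℤ}
    (h0 : ν ∅ = 1)
    (hν : ∀ F, M.IsFlat F → F.Nonempty → ∑ G ∈ M.flats.filter (· ⊆ F), ν G = 0)
    {F : Finset E} (hF : M.IsFlat F) : mu ∅ F = ν F := by
  induction F using Finset.strongInduction with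
  | H F ih =>
  rcases F.eq_empty_or_nonempty with rfl | hne
  · rw [hmu.1 ∅ (M.mem_flats.2 hM), h0]
  have hFmem : F ∈ M.flats.filter (· ⊆ F) := mem_filter.2 ⟨M.mem_flats.2 hF, subset_rfl⟩
  have hmu_sum : ∑ G ∈ M.flats.filter (· ⊆ F), mu ∅ G = 0 := by
    simpa using hmu.2.2 ∅ (M.mem_flats.2 hM) F (M.mem_flats.2 hF) (empty_ssubset.2 hne)
  have hν_sum := hν F hF hne
  rw [← sum_erase_add _ _ hFmem] at hmu_sum hν_sum
  have herase : ∑ G ∈ (M.flats.filter (· ⊆ F)).erase F, mu ∅ G =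
      ∑ G ∈ (M.flats.filter (· ⊆ F)).erase F, ν G := by
    refine sum_congr rfl fun G hG => ?_
    obtain ⟨hGF, hG⟩ := mem_erase.1 hG
    obtain ⟨hG, hGsub⟩ := mem_filter.1 hG
    exact ih G (ssubset_of_subset_of_ne hGsub hGF) (M.mem_flats.1 hG)
  linarith

end FinMatroid

namespace Finset

variable {α : Type*} [LinearOrder α] {s : Finset α} {a : α}

lemma min_eq_coe_of_mem (ha : a ∈ s) (h : ∀ x ∈ s, a ≤ x) : s.min = a :=
  le_antisymm (min_le ha) (Finset.le_min fun x hx => WithTop.coe_le_coe.2 (h x hx))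

lemma coe_lt_min_of_notMem (ha : a ∉ s) (h : ∀ x ∈ s, a ≤ x) : (a : WithTop α) < s.min :=
  (Finset.le_min fun x hx => WithTop.coe_le_coe.2 (h x hx)).lt_of_ne fun h' =>
    ha (mem_of_min h'.symm)

lemma sup_univ_eq_last {β : Type*} [SemilatticeSup β] [OrderBot β] {k : ℕ}
    {f : Fin (k + 1) → β} (hf : Monotone f) : univ.sup f = f (Fin.last k) :=
  le_antisymm (Finset.sup_le fun i _ => hf (Fin.le_last i)) (le_sup (mem_univ _))

end Finset

namespace Fin

variable {α : Type*} [Preorder α] {n : ℕ} {g : Fin n → α} {a : α}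

lemma strictMono_snoc :
    StrictMono (snoc g a : Fin (n + 1) → α) ↔ StrictMono g ∧ ∀ i, g i < a := by
  refine ⟨fun h => ⟨fun i j hij => ?_, fun i => ?_⟩, fun ⟨hg, ha⟩ i j hij => ?_⟩
  · simpa using h (castSucc_lt_castSucc_iff.2 hij)
  · simpa using h (castSucc_lt_last i)
  · obtain ⟨i, rfl⟩ := exists_castSucc_eq.2 (ne_last_of_lt hij)
    induction j using lastCases with
    | last => simpa using ha i
    | cast j => simpa using hg (castSucc_lt_castSucc_iff.1 hij)

lemma strictAnti_snoc :
    StrictAnti (snoc g a : Fin (n + 1) → α) ↔ StrictAnti g ∧ ∀ i, a < g i :=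
  strictMono_snoc (α := αᵒᵈ)

end Fin

namespace Polynomial

open Finset

variable {R : Type*} [CommRing R] {p q : R[X]}

lemma coeff_eq_neg_sum_coeff_of_eq_X_sub_one_mul (h : p = (X - 1) * q) (i : ℕ) :
    q.coeff i = -∑ j ∈ range (i + 1), p.coeff j := by
  induction i with
  | zero => simp [h, mul_coeff_zero]
  | succ i ih =>
    have hstep : p.coeff (i + 1) = q.coeff i - q.coeff (i + 1) := by
      simpa [h, mul_comm] using coeff_mul_X_sub_C (p := q) (r := 1) (a := i)
    rw [sum_range_succ, hstep, neg_add, ← ih]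
    ring

/-- Dividing `∑ c_j X^(D-j)` by `X - 1`: the coefficients of the quotient are the partial sums
of the `c_j`. -/
lemma coeff_eq_sum_of_eq_X_sub_one_mul (h : p = (X - 1) * q) {D : ℕ} {c : ℕ → R}
    (hp : ∀ j ≤ D, p.coeff j = c (D - j)) (hc : ∑ m ∈ range (D + 1), c m = 0) {k : ℕ}
    (hk : k < D) : q.coeff (D - 1 - k) = ∑ m ∈ range (k + 1), c m := by
  have htail : ∑ j ∈ range (D - k), c (D - j) = ∑ j ∈ range (D - k), c (k + 1 + j) := by
    refine (sum_congr rfl fun j hj => ?_).trans (sum_range_reflect (fun j => c (k + 1 + j)) _)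
    rw [mem_range] at hj
    congr 1
    omega
  have hsplit := sum_range_add c (k + 1) (D - k)
  rw [show k + 1 + (D - k) = D + 1 by omega, hc, ← htail] at hsplit
  rw [coeff_eq_neg_sum_coeff_of_eq_X_sub_one_mul h, show D - 1 - k + 1 = D - k by omega,
    sum_congr rfl fun j hj => hp j (by rw [mem_range] at hj; omega)]
  linear_combination hsplit

end Polynomial

namespace FinMatroid

open Finset Polynomial

section Flags

variable {E : Type*} [Fintype E] [DecidableEq E] [LinearOrder E] (M : FinMatroid E)

def IsInitialDescFlag {k : ℕ} (f : Fin k → Finset E) : Prop :=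
  (∀ i, M.IsFlat (f i)) ∧ StrictMono f ∧ (∀ i : Fin k, M.rank (f i) = i + 1) ∧
    StrictAnti fun i => (f i).min

open Classical in
/-- `univ.sup f` is the last flat of `f`, or `∅` for the empty flag. -/
noncomputable def initialDescFlags (k : ℕ) (F : Finset E) : Finset (Fin k → Finset E) :=
  univ.filter fun f => M.IsInitialDescFlag f ∧ univ.sup f ⊆ F

variable {M} {F : Finset E} {e : E}

lemma mem_initialDescFlags {k : ℕ} {f : Fin k → Finset E} :
    f ∈ M.initialDescFlags k F ↔ M.IsInitialDescFlag f ∧ univ.sup f ⊆ F := by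
  simp [initialDescFlags]

lemma isInitialDescFlag_snoc_iff {k : ℕ} {g : Fin k → Finset E} {H : Finset E} :
    M.IsInitialDescFlag (Fin.snoc g H : Fin (k + 1) → Finset E) ↔
      M.IsInitialDescFlag g ∧ M.IsFlat H ∧ (∀ i, g i ⊂ H) ∧ M.rank H = k + 1 ∧
        ∀ i, H.min < (g i).min := by
  have hmin : (fun i => ((Fin.snoc g H : Fin (k + 1) → Finset E) i).min) =
      Fin.snoc (fun i => (g i).min) H.min :=
    Fin.comp_snoc (fun s : Finset E => s.min) g H
  simp only [IsInitialDescFlag, Fin.forall_fin_succ', Fin.snoc_castSucc, Fin.snoc_last,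
    Fin.strictMono_snoc, hmin, Fin.strictAnti_snoc, Fin.val_castSucc, Fin.val_last]
  tauto

namespace IsInitialDescFlag

variable {k : ℕ} {f : Fin k → Finset E}

lemma sup_eq_last {f : Fin (k + 1) → Finset E} (hf : M.IsInitialDescFlag f) :
    univ.sup f = f (Fin.last k) :=
  sup_univ_eq_last hf.2.1.monotone

lemma isFlat_sup (hM : M.Loopless) (hf : M.IsInitialDescFlag f) : M.IsFlat (univ.sup f) := by
  cases k with
  | zero => simp only [univ_eq_empty, sup_empty]; exact hM
  | succ k => rw [hf.sup_eq_last]; exact hf.1 _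

lemma rank_sup (hf : M.IsInitialDescFlag f) : M.rank (univ.sup f) = k := by
  cases k with
  | zero => simp
  | succ k => rw [hf.sup_eq_last, hf.2.2.1, Fin.val_last]

lemma sup_eq_of_rank_le (hM : M.Loopless) (hf : M.IsInitialDescFlag f)
    (hfF : univ.sup f ⊆ F) (hF : M.rank F ≤ k) : univ.sup f = F :=
  (hf.isFlat_sup hM).eq_of_subset_of_rank_le hfF (by rwa [hf.rank_sup])

end IsInitialDescFlag

lemma snoc_mem_filter_mem_sup_iff (hM : M.Loopless) (hF : M.IsFlat F)
    (he : IsLeast (F : Set E) e) {k : ℕ} {g : Fin k → Finset E} {H : Finset E} :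
    (Fin.snoc g H : Fin (k + 1) → Finset E) ∈
        (M.initialDescFlags (k + 1) F).filter (fun f => e ∈ univ.sup f) ↔
      g ∈ (M.initialDescFlags k F).filter (fun g => e ∉ univ.sup g) ∧
        H = M.closure (insert e (univ.sup g)) := by
  simp only [mem_filter, mem_initialDescFlags]
  constructor
  · rintro ⟨⟨hflag, hsupF⟩, hesup⟩
    rw [hflag.sup_eq_last, Fin.snoc_last] at hsupF hesup
    obtain ⟨hg, hH, hgH, hrank, hmin⟩ := isInitialDescFlag_snoc_iff.1 hflag
    have hgH' : univ.sup g ⊆ H := Finset.sup_le fun i _ => (hgH i).subset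
    have heg : e ∉ univ.sup g := fun heg => by
      obtain ⟨i, -, hei⟩ := mem_sup.1 heg
      have := hmin i
      rw [min_eq_coe_of_mem hesup fun x hx => he.2 (hsupF hx),
        min_eq_coe_of_mem hei fun x hx => he.2 (hsupF ((hgH i).subset hx))] at this
      exact lt_irrefl _ this
    refine ⟨⟨⟨hg, hgH'.trans hsupF⟩, heg⟩, (M.isFlat_closure _).eq_of_subset_of_rank_le
      (hH.closure_subset (insert_subset hesup hgH')) ?_ |>.symm⟩
    rw [rank_closure, (hg.isFlat_sup hM).rank_insert heg, hg.rank_sup, hrank]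
  · rintro ⟨⟨⟨hg, hgF⟩, heg⟩, rfl⟩
    set G := univ.sup g
    have hGH : G ⊆ M.closure (insert e G) := (subset_insert e G).trans (M.subset_closure _)
    have heH : e ∈ M.closure (insert e G) := M.subset_closure _ (mem_insert_self e G)
    have hHF : M.closure (insert e G) ⊆ F := hF.closure_subset (insert_subset he.1 hgF)
    have hrank : M.rank (M.closure (insert e G)) = k + 1 := by
      rw [rank_closure, (hg.isFlat_sup hM).rank_insert heg, hg.rank_sup]
    have hgi : ∀ i, g i ⊆ G := fun i => le_sup (mem_univ i)
    have hflag : M.IsInitialDescFlag (Fin.snoc g (M.closure (insert e G)) : Fin (k + 1) → _) := by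
      refine isInitialDescFlag_snoc_iff.2 ⟨hg, M.isFlat_closure _, fun i => ?_, hrank, fun i => ?_⟩
      · refine ssubset_of_subset_of_ne ((hgi i).trans hGH) fun h => ?_
        have := hg.2.2.1 i
        rw [h, hrank] at this
        omega
      · rw [min_eq_coe_of_mem heH fun x hx => he.2 (hHF hx)]
        exact coe_lt_min_of_notMem (fun h => heg (hgi i h)) fun x hx => he.2 (hgF (hgi i hx))
    rw [hflag.sup_eq_last, Fin.snoc_last]
    exact ⟨⟨hflag, hHF⟩, heH⟩

lemma card_filter_mem_sup_initialDescFlags_succ (hM : M.Loopless) (hF : M.IsFlat F)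
    (he : IsLeast (F : Set E) e) (k : ℕ) :
    #((M.initialDescFlags (k + 1) F).filter fun f => e ∈ univ.sup f) =
      #((M.initialDescFlags k F).filter fun g => e ∉ univ.sup g) := by
  refine card_nbij' Fin.init (fun g => Fin.snoc g (M.closure (insert e (univ.sup g))))
    (fun f hf => ?_) (fun g hg => ?_) (fun f hf => ?_) (fun g _ => Fin.init_snoc _ _)
  · rw [← Fin.snoc_init_self f] at hf
    exact ((snoc_mem_filter_mem_sup_iff hM hF he).1 hf).1
  · exact (snoc_mem_filter_mem_sup_iff hM hF he).2 ⟨hg, rfl⟩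
  · rw [← Fin.snoc_init_self f] at hf
    conv_rhs => rw [← Fin.snoc_init_self f]
    exact congrArg _ ((snoc_mem_filter_mem_sup_iff hM hF he).1 hf).2.symm

lemma sum_range_signed_card_initialDescFlags (hM : M.Loopless) (hF : M.IsFlat F)
    (he : IsLeast (F : Set E) e) (K : ℕ) :
    ∑ j ∈ range (K + 1), (-1 : ℤ) ^ j * #(M.initialDescFlags j F) =
      (-1) ^ K * #((M.initialDescFlags K F).filter fun f => e ∉ univ.sup f) := by
  induction K with
  | zero => simp
  | succ K ih =>
    rw [sum_range_succ, ih, ← card_filter_add_card_filter_not (s := M.initialDescFlags (K + 1) F)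
      (fun f => e ∈ univ.sup f),
      card_filter_mem_sup_initialDescFlags_succ hM hF he K]
    push_cast
    ring

lemma sum_range_rank_signed_card_initialDescFlags (hM : M.Loopless) (hF : M.IsFlat F)
    (hne : F.Nonempty) :
    ∑ j ∈ range (M.rank F + 1), (-1 : ℤ) ^ j * #(M.initialDescFlags j F) = 0 := by
  rw [sum_range_signed_card_initialDescFlags hM hF (isLeast_min' F hne), filter_false_of_mem,
    card_empty, Nat.cast_zero, mul_zero]
  intro f hf
  obtain ⟨hflag, hfF⟩ := mem_initialDescFlags.1 hf
  rw [hflag.sup_eq_of_rank_le hM hfF le_rfl, not_not]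
  exact min'_mem F hne

@[simp]
lemma card_initialDescFlags_zero (F : Finset E) : #(M.initialDescFlags 0 F) = 1 := by
  simp [initialDescFlags, IsInitialDescFlag, Subsingleton.strictMono, Subsingleton.strictAnti]

lemma card_initialDescFlags_eq_sum (hM : M.Loopless) (F : Finset E) (k : ℕ) :
    #(M.initialDescFlags k F) =
      ∑ G ∈ M.flats.filter (fun G => G ⊆ F ∧ M.rank G = k), #(M.initialDescFlags k G) := by
  rw [card_eq_sum_card_fiberwise (f := fun f => univ.sup f) fun f hf => ?_]
  · refine sum_congr rfl fun G hG => congrArg card <| ext fun f => ?_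
    obtain ⟨-, hGF, hGrank⟩ := mem_filter.1 hG
    simp only [mem_filter, mem_initialDescFlags]
    refine ⟨fun ⟨⟨hf, _⟩, hfG⟩ => ⟨hf, hfG.le⟩, fun ⟨hf, hfG⟩ => ?_⟩
    have := hf.sup_eq_of_rank_le hM hfG hGrank.le
    exact ⟨⟨hf, this ▸ hGF⟩, this⟩
  · obtain ⟨hf, hfF⟩ := mem_initialDescFlags.1 hf
    exact mem_filter.2 ⟨M.mem_flats.2 (hf.isFlat_sup hM), hfF, hf.rank_sup⟩

lemma sum_flats_subset_signed_card_initialDescFlags (hM : M.Loopless) (F : Finset E) :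
    ∑ G ∈ M.flats.filter (· ⊆ F), (-1 : ℤ) ^ M.rank G * #(M.initialDescFlags (M.rank G) G) =
      ∑ j ∈ range (M.rank F + 1), (-1 : ℤ) ^ j * #(M.initialDescFlags j F) := by
  rw [← sum_fiberwise_of_maps_to (g := M.rank) (t := range (M.rank F + 1)) fun G hG =>
    mem_range.2 (Nat.lt_succ_of_le (M.rank_mono (mem_filter.1 hG).2))]
  refine sum_congr rfl fun j _ => ?_
  rw [card_initialDescFlags_eq_sum hM, Nat.cast_sum, mul_sum, filter_filter]
  exact sum_congr rfl fun G hG => by rw [(mem_filter.1 hG).2.2]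

lemma mu_empty_eq (hM : M.Loopless) {mu : Finset E → Finset E → ℤ} (hmu : M.IsMobius mu)
    (hF : M.IsFlat F) :
    mu ∅ F = (-1) ^ M.rank F * #(M.initialDescFlags (M.rank F) F) :=
  hmu.apply_empty_eq (ν := fun F => (-1) ^ M.rank F * #(M.initialDescFlags (M.rank F) F)) hM
    (by rw [M.rank_empty]; simp) (fun F hF hne => by
    rw [sum_flats_subset_signed_card_initialDescFlags hM,
      sum_range_rank_signed_card_initialDescFlags hM hF hne]) hF

lemma coeff_charPoly (hM : M.Loopless) {mu : Finset E → Finset E → ℤ} (hmu : M.IsMobius mu)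
    {j : ℕ} (hj : j ≤ M.rk) :
    (M.charPoly mu).coeff j = (-1) ^ (M.rk - j) * #(M.initialDescFlags (M.rk - j) univ) := by
  rw [charPoly, if_pos hM, finsetSum_coeff, card_initialDescFlags_eq_sum hM, Nat.cast_sum,
    mul_sum]
  simp only [coeff_C_mul_X_pow]
  rw [← sum_filter]
  refine sum_congr (filter_congr fun F _ => ?_) fun F hF => ?_
  · have : M.rank F ≤ M.rk := M.rank_mono (subset_univ F)
    simp only [subset_univ, true_and]
    omega
  · obtain ⟨hF, -, hFrank⟩ := mem_filter.1 hF
    rw [mu_empty_eq hM hmu (M.mem_flats.1 hF), hFrank]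

end Flags

lemma card_filter_zero_notMem_initialDescFlags_univ {n d k : ℕ} {M : FinMatroid (Fin (n + 1))}
    (hrk : M.rk = d + 1) (hk : k ≤ d) :
    #((M.initialDescFlags k univ).filter fun f => 0 ∉ univ.sup f) =
      Nat.card {f : Fin k → Finset (Fin (n + 1)) //
        (∀ i, M.IsFlat (f i) ∧ f i ≠ ∅ ∧ f i ≠ Finset.univ) ∧
        (∀ i j, i < j → f i ⊂ f j) ∧
        (∀ i : Fin k, M.rank (f i) = (i : ℕ) + 1) ∧
        (∀ i j, i < j → (f j).min < (f i).min) ∧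
        (∀ i, ((0 : Fin (n + 1)) : WithTop (Fin (n + 1))) < (f i).min)} := by
  classical
  have hzero (S : Finset (Fin (n + 1))) : ((0 : Fin (n + 1)) : WithTop _) < S.min ↔ 0 ∉ S :=
    ⟨notMem_of_coe_lt_min, fun h => coe_lt_min_of_notMem h fun x _ => Fin.zero_le x⟩
  rw [Nat.card_eq_fintype_card, Fintype.card_subtype, initialDescFlags, filter_filter]
  congr 1
  ext f
  simp only [IsInitialDescFlag, hzero, mem_filter, mem_univ, true_and, subset_univ, and_true,
    mem_sup, not_exists]
  refine ⟨fun ⟨⟨hflat, hmono, hrank, hanti⟩, h0⟩ => ⟨fun i => ⟨hflat i, fun h => ?_, fun h => ?_⟩,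
    hmono, hrank, hanti, h0⟩,
    fun ⟨h, hmono, hrank, hanti, h0⟩ => ⟨⟨fun i => (h i).1, hmono, hrank, hanti⟩, h0⟩⟩
  · have := hrank i
    rw [h, rank_empty] at this
    omega
  · have := hrank i
    rw [h, ← rk, hrk] at this
    omega

end FinMatroid

open FinMatroid in
/-- **Björner's formula.** Let `M` be a loopless matroid of rank `d+1` on the ground set
`E = {0, 1, …, n}`, and write the reduced characteristic polynomial as
`χ̄_M(t) = χ_M(t)/(t-1) = Σ_k (-1)^k m_k t^{d-k}`. Then `m_k` is the number of `k`-step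
flags `F_1 ⊊ ⋯ ⊊ F_k` of nonempty proper flats of `M` that are initial (`r(F_i) = i`) and
descending (`min F_1 > min F_2 > ⋯ > min F_k > 0`). -/
theorem bjorner_flag_count (n d : ℕ) (M : FinMatroid (Fin (n + 1)))
    (hM : M.Loopless) (hrk : M.rk = d + 1)
    (mu : Finset (Fin (n + 1)) → Finset (Fin (n + 1)) → ℤ) (hmu : M.IsMobius mu)
    (q : Polynomial ℤ) (hq : M.charPoly mu = (Polynomial.X - 1) * q)
    (k : ℕ) (hk : k ≤ d) :
    (-1 : ℤ) ^ k * q.coeff (d - k) =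
      Nat.card {f : Fin k → Finset (Fin (n + 1)) //
        (∀ i, M.IsFlat (f i) ∧ f i ≠ ∅ ∧ f i ≠ Finset.univ) ∧
        (∀ i j, i < j → f i ⊂ f j) ∧
        (∀ i : Fin k, M.rank (f i) = (i : ℕ) + 1) ∧
        (∀ i j, i < j → (f j).min < (f i).min) ∧
        (∀ i, ((0 : Fin (n + 1)) : WithTop (Fin (n + 1))) < (f i).min)} := by
  have hzero : IsLeast ((Finset.univ : Finset (Fin (n + 1))) : Set (Fin (n + 1))) 0 :=
    ⟨Finset.mem_coe.2 (Finset.mem_univ 0), fun x _ => Fin.zero_le x⟩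
  have hcoeff := Polynomial.coeff_eq_sum_of_eq_X_sub_one_mul hq (D := d + 1)
    (c := fun m => (-1) ^ m * ((M.initialDescFlags m Finset.univ).card : ℤ))
    (fun j hj => by rw [coeff_charPoly hM hmu (hrk ▸ hj), hrk])
    (hrk ▸ sum_range_rank_signed_card_initialDescFlags hM M.isFlat_univ Finset.univ_nonempty)
    (Nat.lt_succ_of_le hk)
  rw [Nat.add_sub_cancel, sum_range_signed_card_initialDescFlags hM M.isFlat_univ hzero] at hcoeff
  rw [hcoeff, ← mul_assoc, ← pow_add, Even.neg_one_pow ⟨k, rfl⟩, one_mul,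
    card_filter_zero_notMem_initialDescFlags_univ hrk hk]
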